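/- arXiv:1707.09429 — 3 statements merged into one kernel-verified Lean document; each statement's English description precedes it below -/
import Mathlib

section
/- Let f be an sos-concave real polynomial in n variables and let k ≥ ⌈deg(f)/2⌉. Suppose y ∈ ℝ^{ℕ^n_{2k}} satisfies y_0 = 1, the moment matrix L_1^{(k)}[y] is positive semidefinite, and the localizing matrix L_f^{(k)}[y] is positive semidefinite. Let u := (y_{e_1},…,y_{e_n}) ∈ ℝ^n, where e_i is the i-th unit multi-index. Then f(u) ≥ R_y(f) ≥ 0. -/
open MvPolynomial Finsupp

noncomputable section

/-- The total degree `|α|` of a multi-index `α ∈ ℕ^n`. -/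
def mdeg {n : ℕ} (α : Fin n →₀ ℕ) : ℕ := ∑ i, α i

/-- `⌈m/2⌉` for a natural number `m`. -/
def halfCeil (m : ℕ) : ℕ := (m + 1) / 2

/-- The Riesz functional `R_y(f) = ∑_γ f_γ y_γ`. -/
def Riesz {n : ℕ} (y : (Fin n →₀ ℕ) → ℝ) (f : MvPolynomial (Fin n) ℝ) : ℝ :=
  ∑ γ ∈ f.support, f.coeff γ * y γ

/-- The `k`-th localizing matrix `L_f^{(k)}[y]`, indexed by multi-indices; its
`(α,β)` entry is `∑_γ f_γ y_{α+β+γ}` when `|α|,|β| ≤ s := k - ⌈deg f / 2⌉` (and `0` otherwise). -/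
def locMat {n : ℕ} (k : ℕ) (f : MvPolynomial (Fin n) ℝ) (y : (Fin n →₀ ℕ) → ℝ) :
    Matrix (Fin n →₀ ℕ) (Fin n →₀ ℕ) ℝ := fun α β =>
  if mdeg α ≤ k - halfCeil f.totalDegree ∧ mdeg β ≤ k - halfCeil f.totalDegree then
    ∑ γ ∈ f.support, f.coeff γ * y (α + β + γ)
  else 0

/-- Positive semidefiniteness of a (block-finitely supported) matrix indexed by multi-indices:
symmetry together with nonnegativity of the quadratic form on all finitely supported vectors. -/
def IsPSD {n : ℕ} (M : Matrix (Fin n →₀ ℕ) (Fin n →₀ ℕ) ℝ) : Prop :=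
  (∀ α β, M α β = M β α) ∧
  ∀ v : (Fin n →₀ ℕ) →₀ ℝ, 0 ≤ ∑ α ∈ v.support, ∑ β ∈ v.support, v α * M α β * v β

/-- The evaluation `u^α` of a monomial with multi-index `α` at a point `u`. -/
def monoEval {n : ℕ} (u : Fin n → ℝ) (α : Fin n →₀ ℕ) : ℝ := ∏ i, u i ^ α i

/-- The finite set of multi-indices `α ∈ ℕ^n` with `|α| ≤ D`. -/
def degLE (n D : ℕ) : Finset (Fin n →₀ ℕ) :=
  (Finset.Iic (Finsupp.equivFunOnFinite.symm fun _ : Fin n => D)).filter fun α => mdeg α ≤ D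

end

/-- A polynomial `f` is sos-convex if there is a matrix polynomial `P(x) ∈ ℝ[x]^{ℓ×n}` with
`∇²f(x) = P(x)ᵀP(x)` identically, i.e. `∂²f/∂xᵢ∂xⱼ = ∑_l P_{l i} P_{l j}`. -/
def SosConvex {n : ℕ} (f : MvPolynomial (Fin n) ℝ) : Prop :=
  ∃ (L : ℕ) (P : Fin L → Fin n → MvPolynomial (Fin n) ℝ),
    ∀ i j : Fin n,
      MvPolynomial.pderiv i (MvPolynomial.pderiv j f) = ∑ l, P l i * P l j

/-- A polynomial `f` is sos-concave if `-f` is sos-convex. -/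
def SosConcave {n : ℕ} (f : MvPolynomial (Fin n) ℝ) : Prop := SosConvex (-f)

/-!
Put `g = -f`, which is sos-convex, and `H(t) = R_y(g(u + t (x - u)))`, a real polynomial in `t`.
Since `y_0 = 1` we have `H(0) = g(u)`, and `H(1) = R_y(g)`. Since `u` is the vector of first
moments, `H'(0) = ∑ᵢ ∂ᵢg(u) R_y(xᵢ - uᵢ) = 0`. The factorisation `∇²g = PᵀP` writes `H''(t)` as
`R_y(∑ₗ wₗ²)` with `wₗ = ∑ᵢ Pₗᵢ(u + t (x - u)) (xᵢ - uᵢ)`; the leading forms of a sum of real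
squares cannot cancel, so `deg wₗ ≤ k`, and positivity of the moment matrix gives `H'' ≥ 0`.
Thus `H` is convex with a critical point at `0`, so `H(1) ≥ H(0)`, i.e. `f(u) ≥ R_y(f)`.
-/

namespace MvPolynomial

open Polynomial (derivative)

variable {σ R : Type*}

open MonomialOrder in
theorem two_mul_totalDegree_le_totalDegree_sum_sq {ι : Type*} [CommRing R] [LinearOrder R]
    [IsStrictOrderedRing R] (s : Finset ι) (p : ι → MvPolynomial σ R) {l : ι} (hl : l ∈ s) :
    2 * (p l).totalDegree ≤ (∑ j ∈ s, p j ^ 2).totalDegree := by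
  obtain ⟨_, _⟩ := exists_wellFoundedGT σ
  obtain ⟨j, hj, hmax⟩ := s.exists_max_image (fun j => degLex.toSyn (degLex.degree (p j))) ⟨l, hl⟩
  set D := degLex.degree (p j)
  have hlj : (p l).totalDegree ≤ (p j).totalDegree := degLex_totalDegree_monotone (hmax l hl)
  rcases eq_or_ne (p j) 0 with hj0 | hj0
  · simp_all
  -- Under degLex the coefficient of `D + D` in `p i ^ 2` is `(coeff D (p i))^2`: no cancellation.
  have hcoeff : 0 < (∑ j ∈ s, p j ^ 2).coeff (D + D) := by
    rw [coeff_sum]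
    refine Finset.sum_pos' (fun i hi => ?_) ⟨j, hj, ?_⟩
    · rw [sq, coeff_mul_of_add_of_degree_le (hmax i hi) (hmax i hi)]
      exact mul_self_nonneg _
    · rw [sq, coeff_mul_of_degree_add]
      exact mul_self_pos.mpr (degLex.leadingCoeff_ne_zero_iff.mpr hj0)
  calc 2 * (p l).totalDegree ≤ (D + D).degree := by
        rw [map_add, degree_degLexDegree]; omega
    _ ≤ _ := le_totalDegree (mem_support_iff.mpr hcoeff.ne')

section CommSemiring

variable [CommSemiring R]

theorem totalDegree_pderiv_add_one_le {p : MvPolynomial σ R} {i : σ} (h : pderiv i p ≠ 0) :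
    (pderiv i p).totalDegree + 1 ≤ p.totalDegree := by
  obtain ⟨m, hm, hmax⟩ := Finset.exists_mem_eq_sup _ (support_nonempty.mpr h)
    fun s : σ →₀ ℕ => s.sum fun _ e => e
  have hcoeff : coeff (m + Finsupp.single i 1) p ≠ 0 := by
    have := mem_support_iff.mp hm
    rw [coeff_pderiv] at this
    exact left_ne_zero_of_mul this
  calc (pderiv i p).totalDegree + 1 = (m + Finsupp.single i 1).sum fun _ e => e := by
        rw [totalDegree, hmax, Finsupp.sum_add_index' (fun _ => rfl) (fun _ _ _ => rfl)]
        simp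
    _ ≤ p.totalDegree := le_totalDegree (mem_support_iff.mpr hcoeff)

theorem totalDegree_aeval_le {τ : Type*} {φ : σ → MvPolynomial τ R}
    (hφ : ∀ i, (φ i).totalDegree ≤ 1) (p : MvPolynomial σ R) :
    (aeval φ p).totalDegree ≤ p.totalDegree := by
  conv_lhs => rw [p.as_sum, map_sum]
  refine totalDegree_finsetSum_le fun s hs => ?_
  rw [aeval_monomial, algebraMap_eq]
  refine (totalDegree_mul _ _).trans ?_
  rw [totalDegree_C, zero_add]
  refine (totalDegree_finsetProd _ _).trans ((Finset.sum_le_sum fun i _ => ?_).trans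
    (le_totalDegree hs))
  exact (totalDegree_pow _ _).trans (by simpa using Nat.mul_le_mul_left (s i) (hφ i))

end CommSemiring

variable [CommRing R]

theorem totalDegree_X_sub_C_le (i : σ) (r : R) : (X i - C r : MvPolynomial σ R).totalDegree ≤ 1 :=
  (totalDegree_sub_C_le _ _).trans ((totalDegree_monomial_le _ _).trans (by simp))

/-- `lineSubst u p` is `p(u + t (x - u))`, a polynomial in `t` with coefficients in
`MvPolynomial σ R`. -/
noncomputable def lineSubst (u : σ → R) : MvPolynomial σ R →ₐ[R] Polynomial (MvPolynomial σ R) :=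
  aeval fun i => Polynomial.C (C (u i)) + Polynomial.X * Polynomial.C (X i - C (u i))

theorem lineSubst_X (u : σ → R) (i : σ) :
    lineSubst u (X i) = Polynomial.C (C (u i)) + Polynomial.X * Polynomial.C (X i - C (u i)) :=
  aeval_X _ i

theorem eval_C_lineSubst (u : σ → R) (t : R) (p : MvPolynomial σ R) :
    (lineSubst u p).eval (C t) = aeval (fun i => C (u i) + C t * (X i - C (u i))) p := by
  induction p using MvPolynomial.induction_on with
  | C a => simp [lineSubst]
  | add p q hp hq => simp [hp, hq]
  | mul_X p i hp => simp [hp, lineSubst_X, mul_comm]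

theorem eval_zero_lineSubst (u : σ → R) (p : MvPolynomial σ R) :
    (lineSubst u p).eval 0 = C (eval u p) := by
  induction p using MvPolynomial.induction_on with
  | C a => simp [lineSubst]
  | add p q hp hq => simp [hp, hq]
  | mul_X p i hp => simp [hp, lineSubst_X]

theorem eval_one_lineSubst (u : σ → R) (p : MvPolynomial σ R) :
    (lineSubst u p).eval 1 = p := by
  rw [← C_1, eval_C_lineSubst]
  simp

theorem totalDegree_eval_lineSubst_le (u : σ → R) (t : R) (p : MvPolynomial σ R) :
    ((lineSubst u p).eval (C t)).totalDegree ≤ p.totalDegree := by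
  rw [eval_C_lineSubst]
  refine totalDegree_aeval_le (fun i => ?_) p
  refine (totalDegree_add _ _).trans (max_le (by simp) ((totalDegree_mul _ _).trans ?_))
  rw [totalDegree_C, zero_add]
  exact totalDegree_X_sub_C_le i (u i)

variable [Fintype σ]

theorem derivative_lineSubst (u : σ → R) (p : MvPolynomial σ R) :
    derivative (lineSubst u p) =
      ∑ i, lineSubst u (pderiv i p) * Polynomial.C (X i - C (u i)) := by
  classical
  induction p using MvPolynomial.induction_on with
  | C a => simp [lineSubst]
  | add p q hp hq => simp [hp, hq, add_mul, Finset.sum_add_distrib]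
  | mul_X p i hp =>
    have hsingle : ∑ j, lineSubst u (p * pderiv j (X i)) * Polynomial.C (X j - C (u j)) =
        lineSubst u p * Polynomial.C (X i - C (u i)) := by
      rw [Finset.sum_eq_single i (fun j _ hj => by simp [pderiv_X_of_ne hj.symm]) (by simp)]
      simp
    have hX : derivative (lineSubst u (X i)) = Polynomial.C (X i - C (u i)) := by
      simp [lineSubst_X]
    rw [map_mul, Polynomial.derivative_mul, hp, hX]
    simp only [pderiv_mul, map_add, add_mul, Finset.sum_add_distrib, hsingle]
    rw [Finset.sum_mul]
    exact congrArg (· + _) (Finset.sum_congr rfl fun _ _ => by rw [map_mul]; ring)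

theorem eval_zero_derivative_lineSubst (u : σ → R) (p : MvPolynomial σ R) :
    (derivative (lineSubst u p)).eval 0 = ∑ i, C (eval u (pderiv i p)) * (X i - C (u i)) := by
  simp [derivative_lineSubst, Polynomial.eval_finsetSum, eval_zero_lineSubst]

theorem derivative_derivative_lineSubst_eq_sum_sq (u : σ → R) {p : MvPolynomial σ R} {L : ℕ}
    {P : Fin L → σ → MvPolynomial σ R} (hP : ∀ i j, pderiv i (pderiv j p) = ∑ l, P l i * P l j) :
    derivative (derivative (lineSubst u p)) =
      ∑ l, (∑ i, lineSubst u (P l i) * Polynomial.C (X i - C (u i))) ^ 2 := by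
  simp only [derivative_lineSubst, Polynomial.derivative_mul,
    Polynomial.derivative_C, mul_zero, add_zero, Finset.sum_mul, hP, map_sum]
  refine (Finset.sum_congr rfl fun _ _ => Finset.sum_comm).trans (Finset.sum_comm.trans ?_)
  refine Finset.sum_congr rfl fun l _ => ?_
  rw [sq, Finset.sum_mul_sum]
  exact Finset.sum_congr rfl fun _ _ => Finset.sum_congr rfl fun _ _ => by rw [map_mul]; ring

theorem totalDegree_eval_derivative_derivative_lineSubst_le (u : σ → R) (t : R)
    (p : MvPolynomial σ R) :
    ((derivative (derivative (lineSubst u p))).eval (C t)).totalDegree ≤ p.totalDegree := by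
  simp only [derivative_lineSubst, map_sum, Polynomial.derivative_mul,
    Polynomial.derivative_C, mul_zero, add_zero, Finset.sum_mul, Polynomial.eval_finsetSum,
    Polynomial.eval_mul, Polynomial.eval_C]
  refine totalDegree_finsetSum_le fun i _ => totalDegree_finsetSum_le fun j _ => ?_
  rcases eq_or_ne (pderiv j (pderiv i p)) 0 with h | h
  · simp [h]
  have hj := totalDegree_pderiv_add_one_le h
  have hi := totalDegree_pderiv_add_one_le (p := p) (i := i) (fun h' => h (by rw [h', map_zero]))
  refine (totalDegree_mul _ _).trans ?_
  refine (add_le_add ((totalDegree_mul _ _).trans (add_le_add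
    (totalDegree_eval_lineSubst_le u t _) (totalDegree_X_sub_C_le j (u j))))
    (totalDegree_X_sub_C_le i (u i))).trans ?_
  omega

end MvPolynomial

namespace Polynomial

section MapLinear

variable {R A : Type*} [CommSemiring R] [Semiring A] [Algebra R A]

noncomputable def mapLinear (φ : A →ₗ[R] R) : A[X] →ₗ[R] R[X] :=
  lsum fun m => monomial m ∘ₗ φ

variable (φ : A →ₗ[R] R)

theorem mapLinear_monomial (m : ℕ) (a : A) : mapLinear φ (monomial m a) = monomial m (φ a) := by
  simp [mapLinear]

theorem derivative_mapLinear (q : A[X]) :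
    derivative (mapLinear φ q) = mapLinear φ (derivative q) := by
  induction q using Polynomial.induction_on' with
  | add p q hp hq => simp only [map_add, hp, hq]
  | monomial m a =>
    rw [mapLinear_monomial, derivative_monomial, derivative_monomial, mapLinear_monomial,
      ← nsmul_eq_mul', ← nsmul_eq_mul', map_nsmul, map_nsmul, map_nsmul]

theorem eval_mapLinear (t : R) (q : A[X]) :
    (mapLinear φ q).eval t = φ (q.eval (algebraMap R A t)) := by
  induction q using Polynomial.induction_on' with
  | add p q hp hq => simp only [map_add, eval_add, hp, hq]
  | monomial m a =>
    rw [mapLinear_monomial, eval_monomial, eval_monomial, ← map_pow, ← Algebra.commutes,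
      ← Algebra.smul_def, map_smul, smul_eq_mul, mul_comm]

end MapLinear

theorem eval_add_derivative_mul_le {H : ℝ[X]} (hH : ∀ t, 0 ≤ (derivative (derivative H)).eval t)
    {a b : ℝ} (hab : a < b) : H.eval a + (derivative H).eval a * (b - a) ≤ H.eval b := by
  have hderiv (p : ℝ[X]) : _root_.deriv (fun t => p.eval t) = fun t => (derivative p).eval t := by
    ext; exact Polynomial.deriv p
  have hconv : ConvexOn ℝ Set.univ fun t => H.eval t := by
    refine convexOn_univ_of_deriv2_nonneg H.differentiable ?_ fun t => ?_
    · rw [hderiv]; exact (derivative H).differentiable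
    · rw [Function.iterate_succ_apply', Function.iterate_one, hderiv, hderiv]; exact hH t
  have := hconv.deriv_le_slope (Set.mem_univ a) (Set.mem_univ b) hab (H.differentiable a)
  rw [Polynomial.deriv, slope_def_field, le_div_iff₀ (sub_pos.mpr hab)] at this
  linarith

end Polynomial

section Riesz

variable {n : ℕ} (y : (Fin n →₀ ℕ) → ℝ)

noncomputable def rieszLinear : MvPolynomial (Fin n) ℝ →ₗ[ℝ] ℝ :=
  (basisMonomials (Fin n) ℝ).constr ℝ y

@[simp]
theorem rieszLinear_apply (p : MvPolynomial (Fin n) ℝ) : rieszLinear y p = Riesz y p := by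
  rw [rieszLinear, Module.Basis.constr_apply]
  simp [Riesz, Finsupp.sum, mul_comm]
  rfl

theorem riesz_neg (p : MvPolynomial (Fin n) ℝ) : Riesz y (-p) = -Riesz y p := by
  simp [← rieszLinear_apply]

theorem riesz_C_mul (c : ℝ) (p : MvPolynomial (Fin n) ℝ) : Riesz y (C c * p) = c * Riesz y p := by
  simp [← rieszLinear_apply, C_mul']

theorem riesz_monomial (γ : Fin n →₀ ℕ) (c : ℝ) : Riesz y (monomial γ c) = c * y γ := by
  have hbasis : monomial γ c = c • basisMonomials (Fin n) ℝ γ := by simp [smul_monomial]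
  rw [← rieszLinear_apply, hbasis, map_smul, rieszLinear, Module.Basis.constr_basis, smul_eq_mul]

theorem riesz_one : Riesz y 1 = y 0 := by
  simpa using riesz_monomial y 0 1

theorem riesz_X_sub_C (hy0 : y 0 = 1) (i : Fin n) :
    Riesz y (X i - C (y (Finsupp.single i 1))) = 0 := by
  rw [← rieszLinear_apply, map_sub, rieszLinear_apply, rieszLinear_apply, ← mul_one (C _),
    riesz_C_mul, riesz_one, X, riesz_monomial, hy0, one_mul, mul_one, sub_self]

theorem riesz_mul (p q : MvPolynomial (Fin n) ℝ) :
    Riesz y (p * q) = ∑ α ∈ p.support, ∑ β ∈ q.support, p.coeff α * q.coeff β * y (α + β) := by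
  conv_lhs => rw [p.as_sum, q.as_sum, Finset.sum_mul_sum]
  simp_rw [← rieszLinear_apply, map_sum, monomial_mul, rieszLinear_apply, riesz_monomial]

theorem mdeg_le_totalDegree {R : Type*} [CommSemiring R] {p : MvPolynomial (Fin n) R}
    {α : Fin n →₀ ℕ} (h : α ∈ p.support) : mdeg α ≤ p.totalDegree := by
  rw [mdeg, ← Finsupp.sum_fintype α (fun _ e => e) fun _ => rfl]
  exact le_totalDegree h

theorem riesz_mul_self_nonneg {k : ℕ} (hmom : IsPSD (locMat k 1 y)) {w : MvPolynomial (Fin n) ℝ}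
    (hw : w.totalDegree ≤ k) : 0 ≤ Riesz y (w * w) := by
  have hentry : ∀ α ∈ w.support, ∀ β ∈ w.support, locMat k 1 y α β = y (α + β) := by
    intro α hα β hβ
    have hdeg : ∀ γ ∈ w.support, mdeg γ ≤ k - halfCeil (1 : MvPolynomial (Fin n) ℝ).totalDegree :=
      fun γ hγ => by simpa [halfCeil] using (mdeg_le_totalDegree hγ).trans hw
    rw [locMat, if_pos ⟨hdeg α hα, hdeg β hβ⟩]
    exact (riesz_one fun γ => y (α + β + γ)).trans (by rw [add_zero])
  calc 0 ≤ _ := hmom.2 (AddMonoidAlgebra.coeff w)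
    _ = ∑ α ∈ w.support, ∑ β ∈ w.support, coeff α w * coeff β w * y (α + β) :=
      Finset.sum_congr rfl fun α hα => Finset.sum_congr rfl fun β hβ => by
        rw [hentry α hα β hβ]; exact mul_right_comm _ _ _
    _ = Riesz y (w * w) := (riesz_mul y w w).symm

theorem riesz_nonneg_of_isPSD_locMat {k : ℕ} {f : MvPolynomial (Fin n) ℝ}
    (hloc : IsPSD (locMat k f y)) : 0 ≤ Riesz y f := by
  -- the quadratic form of `L_f[y]` at the unit vector `e_0` is `R_y(f)`
  simpa [locMat, mdeg, Riesz] using hloc.2 (Finsupp.single 0 1)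

theorem riesz_sum_sq_nonneg {k : ℕ} (hmom : IsPSD (locMat k 1 y)) {ι : Type*} (s : Finset ι)
    (w : ι → MvPolynomial (Fin n) ℝ) (hdeg : (∑ l ∈ s, w l ^ 2).totalDegree ≤ 2 * k) :
    0 ≤ Riesz y (∑ l ∈ s, w l ^ 2) := by
  rw [← rieszLinear_apply, map_sum]
  refine Finset.sum_nonneg fun l hl => ?_
  rw [rieszLinear_apply, sq]
  refine riesz_mul_self_nonneg y hmom ?_
  have := (two_mul_totalDegree_le_totalDegree_sum_sq s w hl).trans hdeg
  omega

theorem eval_le_riesz_of_sosConvex {k : ℕ} {g : MvPolynomial (Fin n) ℝ} (hg : SosConvex g)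
    (hdeg : g.totalDegree ≤ 2 * k) (hy0 : y 0 = 1) (hmom : IsPSD (locMat k 1 y)) :
    eval (fun i => y (Finsupp.single i 1)) g ≤ Riesz y g := by
  obtain ⟨L, P, hP⟩ := hg
  set u : Fin n → ℝ := fun i => y (Finsupp.single i 1)
  set H := Polynomial.mapLinear (rieszLinear y) (lineSubst u g)
  have hH (q : Polynomial (MvPolynomial (Fin n) ℝ)) (t : ℝ) :
      (Polynomial.mapLinear (rieszLinear y) q).eval t = Riesz y (q.eval (C t)) := by
    rw [Polynomial.eval_mapLinear, rieszLinear_apply, algebraMap_eq]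
  have h0 : H.eval 0 = eval u g := by
    rw [hH, C_0, eval_zero_lineSubst, ← mul_one (C _), riesz_C_mul, riesz_one, hy0, mul_one]
  have h1 : H.eval 1 = Riesz y g := by rw [hH, C_1, eval_one_lineSubst]
  have hd0 : (Polynomial.derivative H).eval 0 = 0 := by
    rw [Polynomial.derivative_mapLinear, hH, C_0, eval_zero_derivative_lineSubst,
      ← rieszLinear_apply, map_sum]
    exact Finset.sum_eq_zero fun i _ => by
      rw [rieszLinear_apply, riesz_C_mul, riesz_X_sub_C y hy0, mul_zero]
  have hd2 (t : ℝ) : 0 ≤ (Polynomial.derivative (Polynomial.derivative H)).eval t := by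
    have hdeg_t := totalDegree_eval_derivative_derivative_lineSubst_le u t g
    rw [Polynomial.derivative_mapLinear, Polynomial.derivative_mapLinear, hH]
    simp only [derivative_derivative_lineSubst_eq_sum_sq u hP, Polynomial.eval_finsetSum,
      Polynomial.eval_pow] at hdeg_t ⊢
    exact riesz_sum_sq_nonneg y hmom _ _ (hdeg_t.trans hdeg)
  have := Polynomial.eval_add_derivative_mul_le hd2 zero_lt_one
  rw [h0, h1, hd0] at this
  linarith

end Riesz

/-- Let `f` be sos-concave, `k ≥ ⌈deg f/2⌉`, and let `y` satisfy `y_0 = 1`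
with the moment matrix `L_1^{(k)}[y]` and the localizing matrix `L_f^{(k)}[y]` positive
semidefinite. Then, for `u := (y_{e_1},…,y_{e_n})`, one has `f(u) ≥ R_y(f) ≥ 0`. -/
theorem sos_concave_bound {n k : ℕ} (f : MvPolynomial (Fin n) ℝ)
    (hconc : SosConcave f) (hk : halfCeil f.totalDegree ≤ k)
    (y : (Fin n →₀ ℕ) → ℝ) (hy0 : y 0 = 1)
    (hmom : IsPSD (locMat k (1 : MvPolynomial (Fin n) ℝ) y))
    (hloc : IsPSD (locMat k f y))
    (u : Fin n → ℝ) (hu : ∀ i, u i = y (Finsupp.single i 1)) :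
    Riesz y f ≤ MvPolynomial.eval u f ∧ 0 ≤ Riesz y f := by
  refine ⟨?_, riesz_nonneg_of_isPSD_locMat y hloc⟩
  have hdeg : (-f).totalDegree ≤ 2 * k := by
    rw [totalDegree_neg]; unfold halfCeil at hk; omega
  have := eval_le_riesz_of_sosConvex y hconc hdeg hy0 hmom
  rw [riesz_neg, map_neg, ← funext hu] at this
  linarith
end

section
/- Let d ≥ 1 and let ξ ∈ ℝ^{ℕ^n_{2d}} with Euclidean norm ‖ξ‖ ≤ 1/2. Then the polynomial c(x) := ‖[x]_d‖² + ξ^T[x]_{2d} satisfies c(x) ≥ (1 + ‖x‖²)/2 for all x ∈ ℝ^n; in particular c is coercive, i.e., every sublevel set {x ∈ ℝ^n : c(x) ≤ M} is bounded. Consequently, if K ⊆ ℝ^n is a nonempty closed set, then c attains its minimum over K. -/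
open MvPolynomial Finsupp

/-! With `S(x) = ‖[x]_d‖²`, the monomials `1, x₁, …, xₙ` give `S ≥ 1 + ‖x‖²`, and since every
`α` with `|α| ≤ 2d` splits as `β + γ` with `|β|, |γ| ≤ d`, also `‖[x]_{2d}‖² ≤ S²`. By
Cauchy–Schwarz the perturbation is then at least `-‖ξ‖ S ≥ -S/2`, so `c ≥ S/2`. Bounded sublevel
sets in a proper space make the extreme value theorem apply on any closed set. -/

open Finset

lemma mdeg_eq_degree {n : ℕ} (α : Fin n →₀ ℕ) : mdeg α = α.degree :=
  (degree_eq_sum α).symm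

lemma mem_degLE {n D : ℕ} {α : Fin n →₀ ℕ} : α ∈ degLE n D ↔ mdeg α ≤ D := by
  refine mem_filter.trans (and_iff_right_of_imp fun h => mem_Iic.2 fun i => ?_)
  exact (single_le_sum (f := fun j => α j) (fun _ _ => Nat.zero_le _) (mem_univ i)).trans h

lemma exists_add_eq_of_mdeg_le_add {n a b : ℕ} {α : Fin n →₀ ℕ} (h : mdeg α ≤ a + b) :
    ∃ β γ, β + γ = α ∧ mdeg β ≤ a ∧ mdeg γ ≤ b := by
  rw [mdeg_eq_degree] at h
  obtain ⟨β, hβα, hβ⟩ := exists_le_degree_eq α (min a α.degree) (min_le_right _ _)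
  have hsplit : β + (α - β) = α := add_tsub_cancel_of_le hβα
  have hdeg : β.degree + (α - β).degree = α.degree := by rw [← map_add, hsplit]
  exact ⟨β, α - β, hsplit, by rw [mdeg_eq_degree]; omega, by rw [mdeg_eq_degree]; omega⟩

lemma monoEval_add {n : ℕ} (x : Fin n → ℝ) (α β : Fin n →₀ ℕ) :
    monoEval x (α + β) = monoEval x α * monoEval x β := by
  simp only [monoEval, Finsupp.coe_add, Pi.add_apply, pow_add, prod_mul_distrib]

lemma monoEval_zero {n : ℕ} (x : Fin n → ℝ) : monoEval x 0 = 1 := by simp [monoEval]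

lemma monoEval_single_one {n : ℕ} (x : Fin n → ℝ) (i : Fin n) :
    monoEval x (Finsupp.single i 1) = x i := by
  rw [monoEval, Finset.prod_eq_single i (fun j _ hj => by simp [hj.symm]) (by simp)]
  simp

@[fun_prop]
lemma continuous_monoEval {n : ℕ} (α : Fin n →₀ ℕ) : Continuous fun x => monoEval x α := by
  unfold monoEval; fun_prop

lemma sum_monoEval_sq_le_mul {n a b : ℕ} (x : Fin n → ℝ) :
    ∑ α ∈ degLE n (a + b), monoEval x α ^ 2 ≤
      (∑ β ∈ degLE n a, monoEval x β ^ 2) * ∑ γ ∈ degLE n b, monoEval x γ ^ 2 := by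
  classical
  have hcover : degLE n (a + b) ⊆ (degLE n a ×ˢ degLE n b).image fun p => p.1 + p.2 := by
    intro α hα
    obtain ⟨β, γ, rfl, hβ, hγ⟩ := exists_add_eq_of_mdeg_le_add (mem_degLE.1 hα)
    exact mem_image.2 ⟨(β, γ), mem_product.2 ⟨mem_degLE.2 hβ, mem_degLE.2 hγ⟩, rfl⟩
  calc ∑ α ∈ degLE n (a + b), monoEval x α ^ 2
      ≤ ∑ α ∈ (degLE n a ×ˢ degLE n b).image (fun p => p.1 + p.2), monoEval x α ^ 2 :=
        sum_le_sum_of_subset_of_nonneg hcover fun _ _ _ => sq_nonneg _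
    _ ≤ ∑ p ∈ degLE n a ×ˢ degLE n b, monoEval x (p.1 + p.2) ^ 2 :=
        sum_image_le_of_nonneg fun _ _ => sq_nonneg _
    _ = _ := by simp_rw [sum_mul_sum, sum_product, monoEval_add, mul_pow]

lemma one_add_sum_sq_le_sum_monoEval_sq {n d : ℕ} (hd : 1 ≤ d) (x : Fin n → ℝ) :
    1 + ∑ i, x i ^ 2 ≤ ∑ β ∈ degLE n d, monoEval x β ^ 2 := by
  classical
  have hsingle : (univ.image fun i => Finsupp.single i 1) ⊆ (degLE n d).erase 0 := by
    simp only [subset_iff, mem_image, mem_univ, true_and, mem_erase, mem_degLE]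
    rintro _ ⟨i, rfl⟩
    exact ⟨by simp, by simpa [mdeg_eq_degree] using hd⟩
  have h0 : (0 : Fin n →₀ ℕ) ∈ degLE n d := mem_degLE.2 (by simp [mdeg])
  rw [← Finset.add_sum_erase _ _ h0, monoEval_zero, one_pow]
  gcongr
  calc ∑ i, x i ^ 2 = ∑ β ∈ univ.image fun i => Finsupp.single i 1, monoEval x β ^ 2 := by
        rw [sum_image fun i _ j _ h => Finsupp.single_left_injective one_ne_zero h]
        simp only [monoEval_single_one]
    _ ≤ _ := sum_le_sum_of_subset_of_nonneg hsingle fun _ _ _ => sq_nonneg _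

lemma norm_le_sqrt_sum_sq {n : ℕ} (x : Fin n → ℝ) : ‖x‖ ≤ √(∑ i, x i ^ 2) :=
  (pi_norm_le_iff_of_nonneg (Real.sqrt_nonneg _)).2 fun i =>
    Real.abs_le_sqrt (single_le_sum (f := fun j => x j ^ 2) (fun _ _ => sq_nonneg _) (mem_univ i))

lemma isBounded_sublevel_of_sum_sq_le {n : ℕ} {f : (Fin n → ℝ) → ℝ}
    (hf : ∀ x, (1 + ∑ i, x i ^ 2) / 2 ≤ f x) (M : ℝ) :
    Bornology.IsBounded {x | f x ≤ M} :=
  (Metric.isBounded_closedBall (x := 0) (r := √(2 * M - 1))).subset fun x hx => by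
    rw [Metric.mem_closedBall, dist_zero_right]
    exact (norm_le_sqrt_sum_sq x).trans (Real.sqrt_le_sqrt (by linarith [hf x, hx.out]))

lemma exists_isMinOn_of_isBounded_sublevel {E : Type*} [PseudoMetricSpace E] [ProperSpace E]
    {f : E → ℝ} (hf : Continuous f) (hbdd : ∀ M, Bornology.IsBounded {x | f x ≤ M})
    {K : Set E} (hK : K.Nonempty) (hKc : IsClosed K) : ∃ x ∈ K, IsMinOn f K x := by
  obtain ⟨x₀, hx₀⟩ := hK
  refine hf.continuousOn.exists_isMinOn' hKc hx₀ (Filter.Eventually.filter_mono inf_le_left ?_)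
  rw [← Metric.cobounded_eq_cocompact]
  filter_upwards [Bornology.isBounded_def.1 (hbdd (f x₀))] with x hx
  exact le_of_not_ge hx

lemma neg_le_sum_mul_monoEval {n d : ℕ} (ξ : (Fin n →₀ ℕ) → ℝ) (x : Fin n → ℝ) :
    -(√(∑ α ∈ degLE n (2 * d), ξ α ^ 2) * ∑ β ∈ degLE n d, monoEval x β ^ 2) ≤
      ∑ α ∈ degLE n (2 * d), ξ α * monoEval x α := by
  have hsq : √(∑ α ∈ degLE n (2 * d), monoEval x α ^ 2) ≤ ∑ β ∈ degLE n d, monoEval x β ^ 2 :=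
    (Real.sqrt_le_left (Finset.sum_nonneg fun _ _ => sq_nonneg _)).2
      (by rw [sq, two_mul]; exact sum_monoEval_sq_le_mul x)
  have hCS := Real.sum_mul_le_sqrt_mul_sqrt (degLE n (2 * d)) (fun α => -ξ α) (monoEval x)
  simp only [neg_mul, sum_neg_distrib, neg_sq] at hCS
  have hscaled := mul_le_mul_of_nonneg_left hsq (Real.sqrt_nonneg (∑ α ∈ degLE n (2 * d), ξ α ^ 2))
  linarith

/-- For `d ≥ 1` and `ξ ∈ ℝ^{ℕ^n_{2d}}` with `‖ξ‖ ≤ 1/2`, the function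
`c(x) = ‖[x]_d‖² + ξᵀ[x]_{2d}` satisfies `c(x) ≥ (1 + ‖x‖²)/2`; in particular it is
coercive (all sublevel sets are bounded), and `c` attains its minimum over every
nonempty closed set `K ⊆ ℝⁿ`. -/
theorem perturbed_objective_coercive {n d : ℕ} (hd : 1 ≤ d)
    (ξ : (Fin n →₀ ℕ) → ℝ)
    (hξ : Real.sqrt (∑ α ∈ degLE n (2 * d), (ξ α) ^ 2) ≤ 1 / 2)
    (c : (Fin n → ℝ) → ℝ)
    (hc : ∀ x, c x = (∑ β ∈ degLE n d, monoEval x β ^ 2) +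
                      ∑ α ∈ degLE n (2 * d), ξ α * monoEval x α) :
    (∀ x : Fin n → ℝ, (1 + ∑ i, x i ^ 2) / 2 ≤ c x) ∧
    (∀ M : ℝ, Bornology.IsBounded {x : Fin n → ℝ | c x ≤ M}) ∧
    (∀ K : Set (Fin n → ℝ), K.Nonempty → IsClosed K →
      ∃ xstar ∈ K, ∀ z ∈ K, c xstar ≤ c z) := by
  have hlower : ∀ x : Fin n → ℝ, (1 + ∑ i, x i ^ 2) / 2 ≤ c x := fun x => by
    have hS := one_add_sum_sq_le_sum_monoEval_sq hd x
    have hpert := neg_le_sum_mul_monoEval (d := d) ξ x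
    have hξS := mul_le_mul_of_nonneg_right hξ (Finset.sum_nonneg fun β (_ : β ∈ degLE n d) =>
      sq_nonneg (monoEval x β))
    rw [hc x]
    linarith
  have hcont : Continuous c := by
    rw [funext hc]
    fun_prop
  have hbdd := isBounded_sublevel_of_sum_sq_le hlower
  exact ⟨hlower, hbdd, fun K hK hKc => exists_isMinOn_of_isBounded_sublevel hcont hbdd hK hKc⟩
end

section
/- The polynomial f(x₁,x₂,x₃) = x₁⁴ + x₂⁴ + x₃⁴ + 2x₁²x₂² + x₁²x₃² + x₂²x₃² − 4x₁ − 4x₂ − 4x₃ + 1 is convex on ℝ³; equivalently, its Hessian matrix ∇²f(x), whose entries are 12x₁²+4x₂²+2x₃², 8x₁x₂, 4x₁x₃ (first row), 8x₁x₂, 4x₁²+12x₂²+2x₃², 4x₂x₃ (second row), 4x₁x₃, 4x₂x₃, 2x₁²+2x₂²+12x₃² (third row), is positive semidefinite for every x ∈ ℝ³. -/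
/-!
Up to an affine part, `f = ½ (x₁² + x₂² + x₃²)² + ½ (x₁² + x₂²)² + ½ x₃⁴`, and the square of a
nonnegative convex function is convex. Differentiating the same decomposition twice writes the
Hessian quadratic form `vᵀ ∇²f(x) v` as a sum of nonnegative terms.
-/

open Set Matrix

lemma convexOn_sq_apply {𝕜 ι : Type*} [CommRing 𝕜] [LinearOrder 𝕜] [IsStrictOrderedRing 𝕜]
    (i : ι) : ConvexOn 𝕜 univ fun x : ι → 𝕜 => x i ^ 2 :=
  (even_two.convexOn_pow (𝕜 := 𝕜)).comp_linearMap
    (LinearMap.proj (R := 𝕜) (φ := fun _ : ι => 𝕜) i)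

lemma concaveOn_apply {𝕜 ι : Type*} [Semiring 𝕜] [PartialOrder 𝕜] (i : ι) :
    ConcaveOn 𝕜 univ fun x : ι → 𝕜 => x i :=
  (LinearMap.proj i : (ι → 𝕜) →ₗ[𝕜] 𝕜).concaveOn convex_univ

lemma quartic_convexOn :
    ConvexOn ℝ univ (fun x : Fin 3 → ℝ =>
      x 0 ^ 4 + x 1 ^ 4 + x 2 ^ 4 + 2 * x 0 ^ 2 * x 1 ^ 2 + x 0 ^ 2 * x 2 ^ 2
        + x 1 ^ 2 * x 2 ^ 2 - 4 * x 0 - 4 * x 1 - 4 * x 2 + 1) := by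
  have hsq01 : ConvexOn ℝ univ fun x : Fin 3 → ℝ => x 0 ^ 2 + x 1 ^ 2 :=
    (convexOn_sq_apply 0).add (convexOn_sq_apply 1)
  have hsq012 : ConvexOn ℝ univ fun x : Fin 3 → ℝ => x 0 ^ 2 + x 1 ^ 2 + x 2 ^ 2 :=
    hsq01.add (convexOn_sq_apply 2)
  have hquartic : ConvexOn ℝ univ fun x : Fin 3 → ℝ =>
      (x 0 ^ 2 + x 1 ^ 2 + x 2 ^ 2) ^ 2 + (x 0 ^ 2 + x 1 ^ 2) ^ 2 + (x 2 ^ 2) ^ 2 :=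
    ((hsq012.pow (fun x _ => by positivity) 2).add (hsq01.pow (fun x _ => by positivity) 2)).add
      ((convexOn_sq_apply 2).pow (fun x _ => by positivity) 2)
  have hlinear : ConcaveOn ℝ univ fun x : Fin 3 → ℝ => x 0 + x 1 + x 2 :=
    ((concaveOn_apply 0).add (concaveOn_apply 1)).add (concaveOn_apply 2)
  refine (((hquartic.smul (by norm_num : (0 : ℝ) ≤ 1 / 2)).sub
    (hlinear.smul (by norm_num : (0 : ℝ) ≤ 4))).add_const 1).congr fun x _ => ?_
  simp only [Pi.add_apply, Pi.sub_apply, smul_eq_mul]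
  ring

def quarticHessian (x₁ x₂ x₃ : ℝ) : Matrix (Fin 3) (Fin 3) ℝ :=
  !![12 * x₁ ^ 2 + 4 * x₂ ^ 2 + 2 * x₃ ^ 2, 8 * x₁ * x₂, 4 * x₁ * x₃;
     8 * x₁ * x₂, 4 * x₁ ^ 2 + 12 * x₂ ^ 2 + 2 * x₃ ^ 2, 4 * x₂ * x₃;
     4 * x₁ * x₃, 4 * x₂ * x₃, 2 * x₁ ^ 2 + 2 * x₂ ^ 2 + 12 * x₃ ^ 2]

lemma quarticHessian_isHermitian (x₁ x₂ x₃ : ℝ) : (quarticHessian x₁ x₂ x₃).IsHermitian := by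
  ext i j
  fin_cases i <;> fin_cases j <;> rfl

/-- The five terms are the Hessian forms of `½ |x|⁴`, `½ (x₁² + x₂²)²` and `½ x₃⁴`. -/
lemma dotProduct_quarticHessian_mulVec (x₁ x₂ x₃ : ℝ) (v : Fin 3 → ℝ) :
    v ⬝ᵥ quarticHessian x₁ x₂ x₃ *ᵥ v =
      2 * (x₁ ^ 2 + x₂ ^ 2 + x₃ ^ 2) * (v 0 ^ 2 + v 1 ^ 2 + v 2 ^ 2)
        + 4 * (x₁ * v 0 + x₂ * v 1 + x₃ * v 2) ^ 2
        + 2 * (x₁ ^ 2 + x₂ ^ 2) * (v 0 ^ 2 + v 1 ^ 2) + 4 * (x₁ * v 0 + x₂ * v 1) ^ 2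
        + 6 * x₃ ^ 2 * v 2 ^ 2 := by
  simp only [dotProduct, mulVec, quarticHessian, of_apply, cons_val', cons_val_fin_one,
    Fin.sum_univ_three, Fin.isValue, cons_val_zero, cons_val_one, cons_val]
  ring

lemma quarticHessian_posSemidef (x₁ x₂ x₃ : ℝ) : (quarticHessian x₁ x₂ x₃).PosSemidef := by
  refine posSemidef_iff_dotProduct_mulVec.2 ⟨quarticHessian_isHermitian x₁ x₂ x₃, fun v => ?_⟩
  rw [star_trivial, dotProduct_quarticHessian_mulVec]
  positivity

/-- The polynomial
`f(x₁,x₂,x₃) = x₁⁴ + x₂⁴ + x₃⁴ + 2x₁²x₂² + x₁²x₃² + x₂²x₃² − 4x₁ − 4x₂ − 4x₃ + 1`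
is convex on `ℝ³`; equivalently, its Hessian matrix is positive semidefinite at every point. -/
theorem quartic_convex_hessian_psd :
    ConvexOn ℝ Set.univ (fun x : Fin 3 → ℝ =>
      x 0 ^ 4 + x 1 ^ 4 + x 2 ^ 4 + 2 * x 0 ^ 2 * x 1 ^ 2 + x 0 ^ 2 * x 2 ^ 2
        + x 1 ^ 2 * x 2 ^ 2 - 4 * x 0 - 4 * x 1 - 4 * x 2 + 1) ∧
    ∀ x₁ x₂ x₃ : ℝ,
      (!![12 * x₁ ^ 2 + 4 * x₂ ^ 2 + 2 * x₃ ^ 2, 8 * x₁ * x₂, 4 * x₁ * x₃;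
          8 * x₁ * x₂, 4 * x₁ ^ 2 + 12 * x₂ ^ 2 + 2 * x₃ ^ 2, 4 * x₂ * x₃;
          4 * x₁ * x₃, 4 * x₂ * x₃,
            2 * x₁ ^ 2 + 2 * x₂ ^ 2 + 12 * x₃ ^ 2] : Matrix (Fin 3) (Fin 3) ℝ).PosSemidef :=
  ⟨quartic_convexOn, quarticHessian_posSemidef⟩
end
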